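/- Let T be a collection of 3-element subsets of [n] with pairwise intersections of size at most 1, and let C₃ = {e_t ∧ ∂e_S : S ∈ T, t ∈ S} and F₃ = {e_t ∧ ∂e_S : S ∈ T, t ∈ [n]∖S} in the exterior algebra E on e₁,…,e_n. Then span(C₃) ∩ span(F₃) = 0, and span(C₃) has dimension |T| (since e_t ∧ ∂e_S = ±e_S for t ∈ S). -/

import Mathlib

/-!
Let `φ_S` be the functional on `E` reading off the coefficient of `e_S`. For `t ∈ S` we have
`e_t ∧ ∂e_S = e_S`, so `span C₃` is spanned by the monomials `e_S`, `S ∈ T`, and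
`φ_S (e_{S'}) = δ_{S S'}` because distinct members of `T` share at most one element. Each monomial
`e_t ∧ e_x ∧ e_y` of `e_t ∧ ∂e_{S'}` with `t ∉ S'` has `x ≠ y` in `S'`, so `{t, x, y}` lies in
no `S ∈ T` and all `φ_S` vanish on `F₃`. A family admitting a biorthogonal system of
functionals is linearly independent, and its span meets `⋂ ker φ_S` trivially.
-/

open ExteriorAlgebra

variable (n : ℕ)

/-- The standard generator `e i` of the exterior algebra `E = Λ(ℂⁿ)`. -/
noncomputable def gen (i : Fin n) : ExteriorAlgebra ℂ (Fin n → ℂ) :=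
  ι ℂ (Pi.single i (1 : ℂ))

/-- `∂e_{ijk} = e_j ∧ e_k - e_i ∧ e_k + e_i ∧ e_j`. -/
noncomputable def bdry (i j k : Fin n) : ExteriorAlgebra ℂ (Fin n → ℂ) :=
  gen n j * gen n k - gen n i * gen n k + gen n i * gen n j

/-- The underlying 3-element subset of an ordered triple. -/
def toSet (p : Fin n × Fin n × Fin n) : Finset (Fin n) := {p.1, p.2.1, p.2.2}

theorem LinearIndependent.of_biorthogonal {R M ι : Type*} [CommRing R] [AddCommGroup M]
    [Module R M] [DecidableEq ι] {m : ι → M} {φ : ι → Module.Dual R M}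
    (hφm : ∀ i j, φ i (m j) = if i = j then 1 else 0) :
    LinearIndependent R m := by
  rw [linearIndependent_iff']
  intro s c hc i hi
  simpa [hφm, hi] using congrArg (φ i) hc

theorem Submodule.span_range_inf_eq_bot_of_biorthogonal {R M ι : Type*} [CommRing R]
    [AddCommGroup M] [Module R M] [DecidableEq ι] {m : ι → M} {φ : ι → Module.Dual R M}
    (hφm : ∀ i j, φ i (m j) = if i = j then 1 else 0) {W : Submodule R M}
    (hW : ∀ i, W ≤ LinearMap.ker (φ i)) :
    span R (Set.range m) ⊓ W = ⊥ := by
  rw [eq_bot_iff]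
  rintro x ⟨hxm, hxW⟩
  obtain ⟨c, rfl⟩ := Finsupp.mem_span_range_iff_exists_finsupp.1 hxm
  have hc : c = 0 := Finsupp.ext fun i => by
    simpa [Finsupp.sum, hφm] using hW i hxW
  simp [hc]

namespace ExteriorAlgebra

variable {R σ : Type*} [CommRing R] {k : ℕ}

/-- The coefficient of `e_{t 0} ∧ ⋯ ∧ e_{t (k-1)}`, where `e_s = Pi.single s 1`. -/
noncomputable def wedgeCoeff (t : Fin k → σ) : ExteriorAlgebra R (σ → R) →ₗ[R] R :=
  liftAlternating (Pi.single (M := fun i => (σ → R) [⋀^Fin i]→ₗ[R] R) k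
    (Matrix.detRowAlternating.compLinearMap (LinearMap.funLeft R R t)))

theorem wedgeCoeff_ιMulti (t : Fin k → σ) (v : Fin k → σ → R) :
    wedgeCoeff t (ιMulti R k v) = (Matrix.of fun p q => v p (t q)).det := by
  rw [wedgeCoeff, liftAlternating_apply_ιMulti, Pi.single_eq_same]
  rfl

variable [DecidableEq σ]

theorem wedgeCoeff_ιMulti_single_self {t : Fin k → σ} (ht : t.Injective) :
    wedgeCoeff t (ιMulti R k fun p => Pi.single (t p) 1) = 1 := by
  have hone : (Matrix.of fun p q => (Pi.single (t p) 1 : σ → R) (t q)) = 1 := by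
    ext p q
    simp [Pi.single_apply, ht.eq_iff, Matrix.one_apply, eq_comm]
  rw [wedgeCoeff_ιMulti, hone, Matrix.det_one]

theorem wedgeCoeff_ιMulti_single_eq_zero (t s : Fin k → σ) {p : Fin k}
    (hp : s p ∉ Set.range t) :
    wedgeCoeff t (ιMulti R k fun p => Pi.single (s p) 1) = 0 := by
  rw [wedgeCoeff_ιMulti]
  refine Matrix.det_eq_zero_of_row_eq_zero p fun q => ?_
  simp only [Matrix.of_apply, Pi.single_apply, ite_eq_right_iff]
  exact fun h => (hp ⟨q, h⟩).elim

end ExteriorAlgebra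

theorem Finset.not_pair_subset_of_card_inter_le_one {α : Type*} [DecidableEq α]
    {S T : Finset α} (hST : (S ∩ T).card ≤ 1) {x y : α} (hx : x ∈ T) (hy : y ∈ T)
    (hxy : x ≠ y) : ¬ {x, y} ⊆ S := by
  intro hS
  have hxyST : {x, y} ⊆ S ∩ T := subset_inter hS (insert_subset hx (singleton_subset_iff.2 hy))
  have := card_le_card hxyST
  rw [card_pair hxy] at this
  omega

theorem gen_mul_self (a : Fin n) : gen n a * gen n a = 0 := ι_sq_zero _

theorem gen_mul_comm (a b : Fin n) : gen n a * gen n b = -(gen n b * gen n a) :=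
  eq_neg_of_add_eq_zero_left (ι_add_mul_swap _ _)

theorem gen_mul_gen_mul_gen (a b c : Fin n) :
    gen n a * (gen n b * gen n c) = ιMulti ℂ 3 fun p => Pi.single (![a, b, c] p) 1 := by
  rw [ιMulti_apply]
  simp [List.ofFn_succ, gen]

theorem gen_mul_bdry_of_mem {a b c t : Fin n} (ht : t ∈ toSet n (a, b, c)) :
    gen n t * bdry n a b c = gen n a * (gen n b * gen n c) := by
  simp only [toSet, Finset.mem_insert, Finset.mem_singleton] at ht
  rcases ht with rfl | rfl | rfl <;>
    simp only [bdry, mul_add, mul_sub, ← mul_assoc, gen_mul_self, zero_mul]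
  · abel
  · rw [gen_mul_comm n t a]
    simp only [neg_mul, mul_assoc, gen_mul_self, mul_zero]
    abel
  · rw [gen_mul_comm n t a, gen_mul_comm n t b]
    simp only [neg_mul, mul_assoc, gen_mul_self, mul_zero]
    rw [gen_mul_comm n t b]
    simp

def toTuple (p : Fin n × Fin n × Fin n) : Fin 3 → Fin n := ![p.1, p.2.1, p.2.2]

theorem coe_toSet (p : Fin n × Fin n × Fin n) :
    (toSet n p : Set (Fin n)) = Set.range (toTuple n p) := by
  simp only [toSet, toTuple, Finset.coe_insert, Finset.coe_singleton, Matrix.range_cons,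
    Matrix.range_empty, Set.union_empty, Set.singleton_union]

theorem toTuple_mem_toSet (p : Fin n × Fin n × Fin n) (q : Fin 3) :
    toTuple n p q ∈ toSet n p := by
  rw [← Finset.mem_coe, coe_toSet]
  exact Set.mem_range_self q

theorem toTuple_strictMono {p : Fin n × Fin n × Fin n} (hp : p.1 < p.2.1 ∧ p.2.1 < p.2.2) :
    StrictMono (toTuple n p) := by
  rw [Fin.strictMono_iff_lt_succ]
  intro q
  fin_cases q
  exacts [hp.1, hp.2]

theorem wedgeCoeff_toTuple_self {p : Fin n × Fin n × Fin n} (hp : p.1 < p.2.1 ∧ p.2.1 < p.2.2) :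
    wedgeCoeff (toTuple n p) (gen n p.1 * (gen n p.2.1 * gen n p.2.2)) = 1 := by
  rw [gen_mul_gen_mul_gen]
  exact wedgeCoeff_ιMulti_single_self (toTuple_strictMono n hp).injective

theorem wedgeCoeff_gen_mul_gen_mul_gen_eq_zero {p : Fin n × Fin n × Fin n} {a b c : Fin n}
    (h : ¬ toSet n (a, b, c) ⊆ toSet n p) :
    wedgeCoeff (toTuple n p) (gen n a * (gen n b * gen n c)) = 0 := by
  rw [← Finset.coe_subset, coe_toSet, coe_toSet, Set.range_subset_iff] at h
  obtain ⟨q, hq⟩ := not_forall.1 h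
  rw [gen_mul_gen_mul_gen]
  exact wedgeCoeff_ιMulti_single_eq_zero _ _ hq

theorem wedgeCoeff_toTuple_of_card_inter_le_one {p q : Fin n × Fin n × Fin n}
    (hq : q.1 ≠ q.2.1) (hpq : (toSet n p ∩ toSet n q).card ≤ 1) :
    wedgeCoeff (toTuple n p) (gen n q.1 * (gen n q.2.1 * gen n q.2.2)) = 0 := by
  refine wedgeCoeff_gen_mul_gen_mul_gen_eq_zero n fun h => ?_
  have h1 : q.1 ∈ toSet n q := by simp [toSet]
  have h2 : q.2.1 ∈ toSet n q := by simp [toSet]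
  refine Finset.not_pair_subset_of_card_inter_le_one hpq h1 h2 hq (subset_trans ?_ h)
  simp [toSet, Finset.insert_subset_iff]

theorem wedgeCoeff_gen_mul_bdry_eq_zero {p : Fin n × Fin n × Fin n} {t a b c : Fin n}
    (hbc : ¬ toSet n (t, b, c) ⊆ toSet n p) (hac : ¬ toSet n (t, a, c) ⊆ toSet n p)
    (hab : ¬ toSet n (t, a, b) ⊆ toSet n p) :
    wedgeCoeff (toTuple n p) (gen n t * bdry n a b c) = 0 := by
  rw [bdry, mul_add, mul_sub, map_add, map_sub, wedgeCoeff_gen_mul_gen_mul_gen_eq_zero n hbc,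
    wedgeCoeff_gen_mul_gen_mul_gen_eq_zero n hac, wedgeCoeff_gen_mul_gen_mul_gen_eq_zero n hab]
  simp

theorem span_gen_mul_bdry_le_ker_wedgeCoeff {ι : Type*} {v : ι → Fin n × Fin n × Fin n}
    (hord : ∀ i, (v i).1 < (v i).2.1 ∧ (v i).2.1 < (v i).2.2)
    (hshare : ∀ i j, i ≠ j → (toSet n (v i) ∩ toSet n (v j)).card ≤ 1) (i : ι) :
    Submodule.span ℂ {x | ∃ j, ∃ t ∉ toSet n (v j),
        x = gen n t * bdry n (v j).1 (v j).2.1 (v j).2.2} ≤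
      LinearMap.ker (wedgeCoeff (toTuple n (v i))) := by
  rw [Submodule.span_le]
  rintro _ ⟨j, t, ht, rfl⟩
  have key : ∀ x y : Fin 3, x ≠ y →
      ¬ toSet n (t, toTuple n (v j) x, toTuple n (v j) y) ⊆ toSet n (v i) := by
    intro x y hxy h
    by_cases hij : i = j
    · subst hij
      exact ht (h (Finset.mem_insert_self _ _))
    · exact Finset.not_pair_subset_of_card_inter_le_one (hshare i j hij)
        (toTuple_mem_toSet n _ x) (toTuple_mem_toSet n _ y)
        ((toTuple_strictMono n (hord j)).injective.ne hxy) ((Finset.subset_insert _ _).trans h)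
  exact wedgeCoeff_gen_mul_bdry_eq_zero n (key 1 2 (by decide)) (key 0 2 (by decide))
    (key 0 1 (by decide))

theorem setOf_gen_mul_bdry_mem_eq_range {ι : Type*} (v : ι → Fin n × Fin n × Fin n) :
    {x | ∃ i, ∃ t ∈ toSet n (v i), x = gen n t * bdry n (v i).1 (v i).2.1 (v i).2.2} =
      Set.range fun i => gen n (v i).1 * (gen n (v i).2.1 * gen n (v i).2.2) := by
  ext x
  constructor
  · rintro ⟨i, t, ht, rfl⟩
    exact ⟨i, (gen_mul_bdry_of_mem n ht).symm⟩
  · rintro ⟨i, rfl⟩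
    have hi : (v i).1 ∈ toSet n (v i) := Finset.mem_insert_self _ _
    exact ⟨i, (v i).1, hi, (gen_mul_bdry_of_mem n hi).symm⟩

/-- Let `T` be a collection of 3-element subsets of `[n]` (encoded by a finite family of
increasingly ordered triples `v i`) with pairwise intersections of size at most `1`, and
let `C₃ = {e_t ∧ ∂e_S : S ∈ T, t ∈ S}` and `F₃ = {e_t ∧ ∂e_S : S ∈ T, t ∉ S}`.  Then
`span(C₃) ∩ span(F₃) = 0`, and `span(C₃)` has dimension `|T|`. -/
theorem span_C3_inf_span_F3 {ι : Type*} [Fintype ι] (v : ι → Fin n × Fin n × Fin n)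
    (hord : ∀ i, (v i).1 < (v i).2.1 ∧ (v i).2.1 < (v i).2.2)
    (hshare : ∀ i j, i ≠ j → (toSet n (v i) ∩ toSet n (v j)).card ≤ 1) :
    Submodule.span ℂ {x | ∃ i, ∃ t ∈ toSet n (v i),
        x = gen n t * bdry n (v i).1 (v i).2.1 (v i).2.2} ⊓
      Submodule.span ℂ {x | ∃ i, ∃ t ∉ toSet n (v i),
        x = gen n t * bdry n (v i).1 (v i).2.1 (v i).2.2} = ⊥ ∧
    Module.finrank ℂ (Submodule.span ℂ {x : ExteriorAlgebra ℂ (Fin n → ℂ) |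
        ∃ i, ∃ t ∈ toSet n (v i),
          x = gen n t * bdry n (v i).1 (v i).2.1 (v i).2.2}) = Fintype.card ι := by
  classical
  have hdual : ∀ i j, wedgeCoeff (toTuple n (v i))
      (gen n (v j).1 * (gen n (v j).2.1 * gen n (v j).2.2)) = if i = j then 1 else 0 := by
    intro i j
    split_ifs with hij
    · exact hij ▸ wedgeCoeff_toTuple_self n (hord i)
    · exact wedgeCoeff_toTuple_of_card_inter_le_one n (hord j).1.ne (hshare i j hij)
  rw [setOf_gen_mul_bdry_mem_eq_range]
  exact ⟨Submodule.span_range_inf_eq_bot_of_biorthogonal hdual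
      (span_gen_mul_bdry_le_ker_wedgeCoeff n hord hshare),
    finrank_span_eq_card (LinearIndependent.of_biorthogonal hdual)⟩
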